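/- If Γ₁, …, Γₙ are connected vertex-transitive simple graphs, then their free product ⋆ᵢ Γᵢ is vertex-transitive. -/

import Mathlib

variable {ι : Type} [DecidableEq ι]

abbrev Letter (V : ι → Type) := Σ i, V i

def upd {V : ι → Type} (u : ∀ i, V i) : List (Letter V) → ∀ i, V i
  | [] => u
  | ⟨j, x⟩ :: w => Function.update (upd u w) j x

def Adm {V : ι → Type} (u : ∀ i, V i) (w : List (Letter V)) : Prop :=
  w.Chain' (fun a b => a.1 ≠ b.1) ∧
    ∀ (a : Letter V) (p : List (Letter V)), a :: p <:+ w → a.2 ≠ upd u p a.1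

def Word {V : ι → Type} (u : ∀ i, V i) := {w : List (Letter V) // Adm u w}

def emptyWord {V : ι → Type} (u : ∀ i, V i) : Word u :=
  ⟨[], List.isChain_nil, by intro a p h; simp at h⟩

def Pre {V : ι → Type} (G : ∀ i, SimpleGraph (V i)) (u : ∀ i, V i)
    (v w : List (Letter V)) : Prop :=
  (∃ (p : List (Letter V)) (j : ι) (a b : V j),
      (G j).Adj a b ∧ v = ⟨j, a⟩ :: p ∧ w = ⟨j, b⟩ :: p) ∨
  (∃ (j : ι) (a : V j), (G j).Adj (upd u v j) a ∧ w = ⟨j, a⟩ :: v)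

def freeProd {V : ι → Type} (G : ∀ i, SimpleGraph (V i)) (u : ∀ i, V i) :
    SimpleGraph (Word u) :=
  SimpleGraph.fromRel fun v w => Pre G u v.1 w.1

/-!
An automorphism `α` of a factor `Γ_j` induces an automorphism of the free product: apply `α` to
every letter of factor `j`; since this moves the base point `u j` to `α (u j)`, the bottom letter of
a word must be merged with a new letter `α (u j)`, and this merge is what can create or cancel it.
If the bottom letter of a word is `c` in factor `j`, transitivity of `Γ_j` gives `α` with
`α c = u j`, and the induced automorphism cancels that letter, shortening the word. By induction on
length every vertex is mapped to the empty word.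
-/

namespace FreeProd

variable {V : ι → Type} {u : ∀ i, V i}

section Letters

variable (j : ι) (f : V j → V j)

def factorMap : ∀ i, V i → V i :=
  Function.update (fun _ => id) j f

@[simp] lemma factorMap_self : factorMap j f j = f :=
  Function.update_self ..

variable {j f}

lemma factorMap_of_ne {i : ι} (h : i ≠ j) (x : V i) : factorMap j f i x = x := by
  simp [factorMap, Function.update_of_ne h]

lemma factorMap_eq_update (s : ∀ i, V i) :
    (fun i => factorMap j f i (s i)) = Function.update s j (f (s j)) := by
  funext i
  by_cases h : i = j
  · subst h; simp
  · simp [factorMap_of_ne h, Function.update_of_ne h]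

lemma factorMap_injective (hf : Function.Injective f) (i : ι) :
    Function.Injective (factorMap j f i) := by
  by_cases h : i = j
  · subst h; simpa using hf
  · intro a b hab
    simpa [factorMap_of_ne h] using hab

lemma factorMap_leftInverse {g : V j → V j} (h : Function.LeftInverse g f) (i : ι) :
    Function.LeftInverse (factorMap j g i) (factorMap j f i) := by
  by_cases hi : i = j
  · subst hi; simpa using h
  · intro x
    simp [factorMap_of_ne hi]

lemma factorMap_adj {G : ∀ i, SimpleGraph (V i)} (φ : G j →g G j) {i : ι} {a b : V i}
    (hab : (G i).Adj a b) : (G i).Adj (factorMap j φ i a) (factorMap j φ i b) := by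
  by_cases h : i = j
  · subst h; simpa using φ.map_adj hab
  · simpa [factorMap_of_ne h] using hab

variable (j f) in
def mapLetter (x : Letter V) : Letter V :=
  ⟨x.1, factorMap j f x.1 x.2⟩

end Letters

lemma upd_cons (x : Letter V) (p : List (Letter V)) :
    upd u (x :: p) = Function.update (upd u p) x.1 x.2 :=
  rfl

lemma _root_.Adm.nil : Adm u ([] : List (Letter V)) :=
  (emptyWord u).2

lemma _root_.Adm.tail {x : Letter V} {p : List (Letter V)} (h : Adm u (x :: p)) : Adm u p :=
  ⟨(List.isChain_cons.mp h.1).2, fun a q hq => h.2 a q (hq.trans (List.suffix_cons _ _))⟩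

lemma _root_.Adm.head_ne {x : Letter V} {p : List (Letter V)} (h : Adm u (x :: p)) :
    x.2 ≠ upd u p x.1 :=
  h.2 x p List.suffix_rfl

lemma _root_.Adm.fst_ne {x : Letter V} {p : List (Letter V)} (h : Adm u (x :: p)) :
    ∀ y ∈ p.head?, y.1 ≠ x.1 :=
  fun y hy => ((List.isChain_cons.mp h.1).1 y hy).symm

lemma _root_.Adm.cons {x : Letter V} {p : List (Letter V)} (hp : Adm u p)
    (hfst : ∀ y ∈ p.head?, y.1 ≠ x.1) (hx : x.2 ≠ upd u p x.1) : Adm u (x :: p) := by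
  refine ⟨List.isChain_cons.mpr ⟨fun y hy => (hfst y hy).symm, hp.1⟩, fun a q hq => ?_⟩
  rcases List.suffix_cons_iff.mp hq with h | h
  · obtain ⟨rfl, rfl⟩ := List.cons_eq_cons.mp h
    exact hx
  · exact hp.2 a q h

open Classical in
noncomputable def consReduce (u : ∀ i, V i) (x : Letter V) (p : List (Letter V)) : List (Letter V) :=
  if x.2 = upd u p x.1 then p else x :: p

lemma consReduce_of_eq {x : Letter V} {p : List (Letter V)} (h : x.2 = upd u p x.1) :
    consReduce u x p = p :=
  if_pos h

lemma consReduce_of_ne {x : Letter V} {p : List (Letter V)} (h : x.2 ≠ upd u p x.1) :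
    consReduce u x p = x :: p :=
  if_neg h

lemma upd_consReduce (x : Letter V) (p : List (Letter V)) :
    upd u (consReduce u x p) = Function.update (upd u p) x.1 x.2 := by
  by_cases h : x.2 = upd u p x.1
  · rw [consReduce_of_eq h, h, Function.update_eq_self]
  · rw [consReduce_of_ne h, upd_cons]

lemma _root_.Adm.eq_consReduce {x : Letter V} {p : List (Letter V)} (h : Adm u (x :: p)) :
    x :: p = consReduce u x p :=
  (consReduce_of_ne h.head_ne).symm

lemma _root_.Adm.consReduce {x : Letter V} {p : List (Letter V)} (hp : Adm u p)
    (hfst : ∀ y ∈ p.head?, y.1 ≠ x.1) : Adm u (consReduce u x p) := by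
  by_cases h : x.2 = upd u p x.1
  · rwa [consReduce_of_eq h]
  · rw [consReduce_of_ne h]
    exact hp.cons hfst h

section Induced

variable (u) (j : ι) (f : V j → V j)

/-- The induced map on words. Lists store the top letter first, so the clause `[x]` treats the
bottom letter, which is merged with the new base letter `⟨j, f (u j)⟩`. -/
noncomputable def inducedList : List (Letter V) → List (Letter V)
  | [] => consReduce u ⟨j, f (u j)⟩ []
  | [x] => if x.1 = j then consReduce u (mapLetter j f x) [] else x :: inducedList []
  | x :: y :: p => mapLetter j f x :: inducedList (y :: p)

/-- The factor that a letter put on top of `p` has to avoid; the empty word counts as factor `j`,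
because of the base letter that `inducedList u j f` may create. -/
def topFactor (p : List (Letter V)) : ι :=
  (p.head?.map Sigma.fst).getD j

variable {u j f}

lemma inducedList_cons_of_ne_nil (x : Letter V) {p : List (Letter V)} (hp : p ≠ []) :
    inducedList u j f (x :: p) = mapLetter j f x :: inducedList u j f p := by
  obtain ⟨y, q, rfl⟩ := List.exists_cons_of_ne_nil hp
  rfl

lemma upd_inducedList (p : List (Letter V)) :
    upd u (inducedList u j f p) = fun i => factorMap j f i (upd u p i) := by
  induction p with
  | nil => simp [inducedList, upd_consReduce, factorMap_eq_update, upd]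
  | cons x p ih =>
    rcases eq_or_ne p [] with rfl | hp
    · rw [factorMap_eq_update]
      by_cases hx : x.1 = j
      · obtain ⟨k, a⟩ := x
        subst hx
        simp [inducedList, upd_consReduce, upd_cons, mapLetter]
      · simp [inducedList, hx, upd_consReduce, upd_cons, Function.update_comm hx,
          Function.update_of_ne (Ne.symm hx), upd]
    · rw [inducedList_cons_of_ne_nil x hp, upd_cons, ih, upd_cons]
      funext i
      exact (Function.apply_update (factorMap j f) (upd u p) x.1 x.2 i).symm

lemma topFactor_consReduce_nil (k : ι) (a : V k) : topFactor k (consReduce u ⟨k, a⟩ []) = k := by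
  unfold consReduce
  split_ifs <;> rfl

lemma topFactor_inducedList (p : List (Letter V)) :
    topFactor j (inducedList u j f p) = topFactor j p := by
  match p with
  | [] => exact topFactor_consReduce_nil j _
  | [⟨k, a⟩] =>
    by_cases hk : k = j
    · subst hk
      simp only [inducedList, ↓reduceIte]
      exact topFactor_consReduce_nil k _
    · simp [inducedList, hk, topFactor]
  | x :: y :: p => rfl

lemma fst_ne_of_mem_head?_inducedList {p : List (Letter V)} {k : ι} (hp : topFactor j p ≠ k) :
    ∀ y ∈ (inducedList u j f p).head?, y.1 ≠ k := by
  rw [← topFactor_inducedList (u := u) (f := f)] at hp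
  generalize inducedList u j f p = q at hp ⊢
  cases q <;> simp_all [topFactor]

lemma inducedList_consReduce (hf : Function.Injective f) {p : List (Letter V)} {k : ι}
    (hp : topFactor j p ≠ k) (a : V k) :
    inducedList u j f (consReduce u ⟨k, a⟩ p) =
      consReduce u ⟨k, factorMap j f k a⟩ (inducedList u j f p) := by
  by_cases ha : a = upd u p k
  · rw [consReduce_of_eq ha, consReduce_of_eq]
    simp [upd_inducedList, ha]
  · rw [consReduce_of_ne ha, consReduce_of_ne]
    · rcases eq_or_ne p [] with rfl | hp'
      · have hk : k ≠ j := Ne.symm hp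
        simp [inducedList, hk, factorMap_of_ne hk]
      · exact inducedList_cons_of_ne_nil _ hp'
    · rw [upd_inducedList]
      exact (factorMap_injective hf k).ne ha

lemma inducedList_consReduce_nil (a : V j) :
    inducedList u j f (consReduce u ⟨j, a⟩ []) = consReduce u ⟨j, f a⟩ [] := by
  by_cases ha : a = u j
  · subst ha
    rw [consReduce_of_eq (p := []) rfl]
    rfl
  · rw [consReduce_of_ne (p := []) ha]
    simp [inducedList, mapLetter]

lemma _root_.Adm.eq_nil_of_topFactor_eq {k : ι} {a : V k} {p : List (Letter V)}
    (hw : Adm u (⟨k, a⟩ :: p)) (h : topFactor j p = k) : p = [] ∧ k = j := by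
  have := hw.fst_ne
  cases p <;> simp_all [topFactor]

lemma _root_.Adm.inducedList (hf : Function.Injective f) {w : List (Letter V)} (hw : Adm u w) :
    Adm u (inducedList u j f w) := by
  induction w with
  | nil => exact Adm.nil.consReduce (by simp)
  | cons x p ih =>
    obtain ⟨k, a⟩ := x
    rw [hw.eq_consReduce]
    by_cases htop : topFactor j p = k
    · obtain ⟨rfl, rfl⟩ := hw.eq_nil_of_topFactor_eq htop
      rw [inducedList_consReduce_nil]
      exact Adm.nil.consReduce (by simp)
    · rw [inducedList_consReduce hf htop]
      exact (ih hw.tail).consReduce (fst_ne_of_mem_head?_inducedList htop)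

lemma inducedList_symm_inducedList (e : V j ≃ V j) {w : List (Letter V)} (hw : Adm u w) :
    inducedList u j e.symm (inducedList u j e w) = w := by
  induction w with
  | nil =>
    simp only [inducedList]
    rw [inducedList_consReduce_nil, e.symm_apply_apply, consReduce_of_eq (p := []) rfl]
  | cons x p ih =>
    obtain ⟨k, a⟩ := x
    rw [hw.eq_consReduce]
    by_cases htop : topFactor j p = k
    · obtain ⟨rfl, rfl⟩ := hw.eq_nil_of_topFactor_eq htop
      rw [inducedList_consReduce_nil, inducedList_consReduce_nil, e.symm_apply_apply]
    · have htop' : topFactor j (inducedList u j e p) ≠ k := by rwa [topFactor_inducedList]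
      rw [inducedList_consReduce e.injective htop, inducedList_consReduce e.symm.injective htop',
        ih hw.tail, factorMap_leftInverse e.symm_apply_apply]

lemma inducedList_append_singleton {c : V j} (hc : f c = u j) (p : List (Letter V)) :
    inducedList u j f (p ++ [⟨j, c⟩]) = p.map (mapLetter j f) := by
  induction p with
  | nil => simp [inducedList, mapLetter, consReduce, hc, upd]
  | cons x p ih =>
    rw [List.cons_append, inducedList_cons_of_ne_nil x (by simp), ih, List.map_cons]

end Induced

section Graph

/-- Both kinds of edges of `Pre` at once: `v` and `w` differ only in their top letter, of
factor `k`, which is omitted when it agrees with the state below it. -/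
def Linked (G : ∀ i, SimpleGraph (V i)) (u : ∀ i, V i) (v w : List (Letter V)) : Prop :=
  ∃ (p : List (Letter V)) (k : ι) (a b : V k), (G k).Adj a b ∧ (∀ y ∈ p.head?, y.1 ≠ k) ∧
    v = consReduce u ⟨k, a⟩ p ∧ w = consReduce u ⟨k, b⟩ p

variable {G : ∀ i, SimpleGraph (V i)}

lemma Linked.symm {v w : List (Letter V)} (h : Linked G u v w) : Linked G u w v := by
  obtain ⟨p, k, a, b, hab, hp, rfl, rfl⟩ := h
  exact ⟨p, k, b, a, hab.symm, hp, rfl, rfl⟩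

lemma Linked.ne {v w : List (Letter V)} (h : Linked G u v w) : v ≠ w := by
  obtain ⟨p, k, a, b, hab, -, rfl, rfl⟩ := h
  unfold consReduce
  split_ifs with ha hb hb
  · exact absurd (ha.trans hb.symm) hab.ne
  · exact (List.cons_ne_self _ _).symm
  · exact List.cons_ne_self _ _
  · simpa using hab.ne

lemma Linked.pre {v w : List (Letter V)} (h : Linked G u v w) : Pre G u v w ∨ Pre G u w v := by
  obtain ⟨p, k, a, b, hab, -, rfl, rfl⟩ := h
  by_cases ha : a = upd u p k
  · rw [consReduce_of_eq ha, consReduce_of_ne (x := ⟨k, b⟩) (ha ▸ hab.ne.symm)]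
    exact Or.inl (Or.inr ⟨k, b, ha ▸ hab, rfl⟩)
  by_cases hb : b = upd u p k
  · rw [consReduce_of_eq (x := ⟨k, b⟩) hb, consReduce_of_ne (x := ⟨k, a⟩) ha]
    exact Or.inr (Or.inr ⟨k, a, hb ▸ hab.symm, rfl⟩)
  rw [consReduce_of_ne (x := ⟨k, a⟩) ha, consReduce_of_ne (x := ⟨k, b⟩) hb]
  exact Or.inl (Or.inl ⟨p, k, a, b, hab, rfl, rfl⟩)

lemma linked_of_pre {v w : List (Letter V)} (hv : Adm u v) (hw : Adm u w) (h : Pre G u v w) :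
    Linked G u v w := by
  rcases h with ⟨p, k, a, b, hab, rfl, rfl⟩ | ⟨k, b, hb, rfl⟩
  · exact ⟨p, k, a, b, hab, hv.fst_ne, hv.eq_consReduce, hw.eq_consReduce⟩
  · exact ⟨v, k, _, b, hb, hw.fst_ne, (consReduce_of_eq rfl).symm, hw.eq_consReduce⟩

lemma freeProd_adj_iff {v w : Word u} : (freeProd G u).Adj v w ↔ Linked G u v.1 w.1 := by
  rw [freeProd, SimpleGraph.fromRel_adj]
  refine ⟨fun ⟨_, h⟩ => h.elim (linked_of_pre v.2 w.2) fun h => (linked_of_pre w.2 v.2 h).symm,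
    fun h => ⟨fun hvw => h.ne (congrArg Subtype.val hvw), h.pre⟩⟩

lemma Linked.inducedList {j : ι} (φ : G j ↪g G j) {v w : List (Letter V)} (h : Linked G u v w) :
    Linked G u (inducedList u j φ v) (inducedList u j φ w) := by
  obtain ⟨p, k, a, b, hab, hp, rfl, rfl⟩ := h
  by_cases htop : topFactor j p = k
  · obtain ⟨rfl, rfl⟩ : p = [] ∧ k = j := by cases p <;> simp_all [topFactor]
    rw [inducedList_consReduce_nil, inducedList_consReduce_nil]
    exact ⟨[], k, φ a, φ b, φ.map_adj_iff.mpr hab, by simp, rfl, rfl⟩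
  · rw [inducedList_consReduce φ.injective htop, inducedList_consReduce φ.injective htop]
    exact ⟨_, k, _, _, factorMap_adj φ.toHom hab, fst_ne_of_mem_head?_inducedList htop, rfl, rfl⟩

noncomputable def inducedIso {j : ι} (α : G j ≃g G j) : freeProd G u ≃g freeProd G u where
  toFun w := ⟨inducedList u j α w.1, w.2.inducedList α.injective⟩
  invFun w := ⟨inducedList u j α.symm w.1, w.2.inducedList α.symm.injective⟩
  left_inv w := Subtype.ext (inducedList_symm_inducedList α.toEquiv w.2)
  right_inv w := Subtype.ext (inducedList_symm_inducedList α.symm.toEquiv w.2)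
  map_rel_iff' {v w} := by
    rw [freeProd_adj_iff, freeProd_adj_iff]
    change Linked G u (inducedList u j α v.1) (inducedList u j α w.1) ↔ Linked G u v.1 w.1
    refine ⟨fun h => ?_, Linked.inducedList α.toEmbedding⟩
    convert h.inducedList α.symm.toEmbedding using 1
    exacts [(inducedList_symm_inducedList α.toEquiv v.2).symm,
      (inducedList_symm_inducedList α.toEquiv w.2).symm]

lemma exists_iso_apply_eq_emptyWord (htrans : ∀ i, ∀ a b : V i, ∃ α : G i ≃g G i, α a = b)
    (x : Word u) : ∃ φ : freeProd G u ≃g freeProd G u, φ x = emptyWord u := by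
  obtain ⟨w, hw⟩ := x
  induction hn : w.length generalizing w with
  | zero =>
    obtain rfl := List.eq_nil_of_length_eq_zero hn
    exact ⟨RelIso.refl _, rfl⟩
  | succ n ih =>
    obtain ⟨p, ⟨j, c⟩, rfl⟩ := (List.eq_nil_or_concat' w).resolve_left (by rintro rfl; simp at hn)
    obtain ⟨α, hα⟩ := htrans j c (u j)
    have hpeel : (inducedIso α ⟨p ++ [⟨j, c⟩], hw⟩).1 = p.map (mapLetter j α) :=
      inducedList_append_singleton hα p
    obtain ⟨ψ, hψ⟩ := ih _ (hpeel ▸ (inducedIso α ⟨_, hw⟩).2) (by simpa using hn)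
    exact ⟨(inducedIso α).trans ψ, (congrArg ψ (Subtype.ext hpeel)).trans hψ⟩

end Graph

end FreeProd

theorem stmt16_general {n : ℕ} {V : Fin n → Type} (G : ∀ i, SimpleGraph (V i))
    (u : ∀ i, V i) (htrans : ∀ i, ∀ a b : V i, ∃ α : G i ≃g G i, α a = b) :
    ∀ x y : Word u, ∃ φ : freeProd G u ≃g freeProd G u, φ x = y := by
  intro x y
  obtain ⟨φ, hφ⟩ := FreeProd.exists_iso_apply_eq_emptyWord htrans x
  obtain ⟨ψ, hψ⟩ := FreeProd.exists_iso_apply_eq_emptyWord htrans y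
  exact ⟨φ.trans ψ.symm, by simp [hφ, ← hψ]⟩

/-- The free product of connected vertex-transitive graphs is
vertex-transitive. -/
theorem stmt16 {n : ℕ} {V : Fin n → Type} (G : ∀ i, SimpleGraph (V i))
    (u : ∀ i, V i) (hconn : ∀ i, (G i).Connected)
    (htrans : ∀ i, ∀ a b : V i, ∃ α : G i ≃g G i, α a = b) :
    ∀ x y : Word u, ∃ φ : freeProd G u ≃g freeProd G u, φ x = y :=
  stmt16_general G u htrans
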